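/- Fix η > 0. For each δ > 0 let y^δ satisfy ‖y^δ − y†‖ ≤ δ, and let β = β(δ) > 0 be chosen by the discrepancy principle, i.e., ‖Kx_{ηβ,β}^δ − y^δ‖ = δ. Then as δ → 0 the minimizers x_{ηβ,β}^δ converge strongly in ℓ² to the R_η-minimizing solution x† of Kx = y†. -/

import Mathlib

noncomputable section

open Filter Topology

/-- `ℓ²(ℕ, ℝ)`. -/
abbrev ltwo : Type := lp (fun _ : ℕ => ℝ) 2

/-- `x ∈ ℓ¹`. -/
def inL1 (x : ltwo) : Prop := Memℓp (fun i => x i) 1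

/-- The `ℓ¹`-norm `‖x‖_{ℓ¹} = ∑ |xᵢ|` (junk value if `x ∉ ℓ¹`). -/
noncomputable def l1norm (x : ltwo) : ℝ := ∑' i, |x i|

/-- The elastic-net functional `Φ_{α,β}(x) = ½‖Kx − y‖² + α‖x‖₁ + (β/2)‖x‖₂²`,
real-valued on its effective domain `ℓ¹ ∩ ℓ²` (the convention `Φ = +∞` off `ℓ¹` is
implemented by restricting all statements to `inL1`). -/
noncomputable def Phi {H : Type*} [NormedAddCommGroup H] [InnerProductSpace ℝ H]
    (K : ltwo →L[ℝ] H) (y : H) (α β : ℝ) (x : ltwo) : ℝ :=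
  (1 / 2) * ‖K x - y‖ ^ 2 + α * l1norm x + (β / 2) * ‖x‖ ^ 2

/-- `x` is a minimizer of `Φ_{α,β}` over `ℓ²` (with the `+∞` convention off `ℓ¹`). -/
def IsMinimizer {H : Type*} [NormedAddCommGroup H] [InnerProductSpace ℝ H]
    (K : ltwo →L[ℝ] H) (y : H) (α β : ℝ) (x : ltwo) : Prop :=
  inL1 x ∧ ∀ z : ltwo, inL1 z → Phi K y α β x ≤ Phi K y α β z


/-- The functional `R_η(x) = η‖x‖₁ + ½‖x‖₂²` (finite on `ℓ¹ ∩ ℓ²`). -/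
noncomputable def Rfun (η : ℝ) (x : ltwo) : ℝ := η * l1norm x + (1 / 2) * ‖x‖ ^ 2

/-- `x†` is the `R_η`-minimizing solution of `Kx = y†`. -/
def IsRMinSolution {H : Type*} [NormedAddCommGroup H] [InnerProductSpace ℝ H]
    (K : ltwo →L[ℝ] H) (ydag : H) (η : ℝ) (xdag : ltwo) : Prop :=
  inL1 xdag ∧ K xdag = ydag ∧
    ∀ z : ltwo, inL1 z → K z = ydag → Rfun η xdag ≤ Rfun η z

/-!
Comparing `x_δ` with `x†` in `Φ`, the data term of `x_δ` is exactly `δ²/2` by the discrepancy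
principle and that of `x†` at most `δ²/2`, so `R_η(x_δ) ≤ R_η(x†)`; also `‖K x_δ - y†‖ ≤ 2δ`. Sublevel sets of `R_η` are
compact for coordinatewise convergence, along which `R_η` is lower semicontinuous and `K` is
weakly continuous; hence `R_η(z) ≥ R_η(x†) - o(1)` whenever `K z → y†`. Applied to the midpoints
`(x_δ + x†)/2`, for which the `1`-strong convexity of `R_η` gives
`R_η((x_δ + x†)/2) ≤ R_η(x†) - ‖x_δ - x†‖² / 8`, this forces `x_δ → x†`.
-/

open scoped RealInnerProductSpace

lemma l1norm_nonneg (x : ltwo) : 0 ≤ l1norm x := tsum_nonneg fun _ => abs_nonneg _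

lemma summable_abs_of_inL1 {x : ltwo} (hx : inL1 x) : Summable fun i => |x i| := by
  simpa using (memℓp_gen_iff (p := 1) (by norm_num)).1 hx

lemma summable_sq_apply (x : ltwo) : Summable fun i => x i ^ 2 := by
  simpa using (memℓp_gen_iff (p := 2) (by norm_num)).1 x.2

lemma norm_sq_eq_tsum (x : ltwo) : ‖x‖ ^ 2 = ∑' i, x i ^ 2 := by
  simpa using lp.norm_rpow_eq_tsum (p := 2) (by norm_num) x

lemma hasSum_Rfun (η : ℝ) {x : ltwo} (hx : inL1 x) :
    HasSum (fun i => η * |x i| + 1 / 2 * x i ^ 2) (Rfun η x) := by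
  rw [Rfun, l1norm, norm_sq_eq_tsum]
  exact ((summable_abs_of_inL1 hx).hasSum.mul_left η).add
    ((summable_sq_apply x).hasSum.mul_left _)

lemma sq_norm_le_of_Rfun_le {η C : ℝ} (hη : 0 ≤ η) {x : ltwo} (hx : Rfun η x ≤ C) :
    ‖x‖ ^ 2 ≤ 2 * C := by
  rw [Rfun] at hx
  nlinarith [mul_nonneg hη (l1norm_nonneg x)]

lemma inL1_smul_add (c : ℝ) {x y : ltwo} (hx : inL1 x) (hy : inL1 y) : inL1 (c • (x + y)) := by
  have h : (fun i => (c • (x + y) : ltwo) i) = c • fun i => x i + y i := rfl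
  rw [inL1, h]
  exact (hx.add hy).const_smul c

lemma l1norm_half_smul_add_le {x y : ltwo} (hx : inL1 x) (hy : inL1 y) :
    l1norm ((2⁻¹ : ℝ) • (x + y)) ≤ 2⁻¹ * (l1norm x + l1norm y) := by
  have hxy := (summable_abs_of_inL1 hx).add (summable_abs_of_inL1 hy)
  rw [l1norm, l1norm, l1norm, ← Summable.tsum_add (summable_abs_of_inL1 hx)
    (summable_abs_of_inL1 hy), ← tsum_mul_left]
  refine Summable.tsum_le_tsum (fun i => ?_)
    (summable_abs_of_inL1 (inL1_smul_add _ hx hy)) (hxy.mul_left _)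
  change |2⁻¹ * (x i + y i)| ≤ _
  rw [abs_mul, abs_of_pos (by norm_num : (0 : ℝ) < 2⁻¹)]
  exact mul_le_mul_of_nonneg_left (abs_add_le _ _) (by norm_num)

lemma Rfun_half_smul_add_le {η : ℝ} (hη : 0 ≤ η) {x y : ltwo} (hx : inL1 x) (hy : inL1 y) :
    Rfun η ((2⁻¹ : ℝ) • (x + y)) ≤ 2⁻¹ * (Rfun η x + Rfun η y) - 8⁻¹ * ‖x - y‖ ^ 2 := by
  have hl1 := mul_le_mul_of_nonneg_left (l1norm_half_smul_add_le hx hy) hη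
  have hnorm : ‖(2⁻¹ : ℝ) • (x + y)‖ ^ 2 = 4⁻¹ * ‖x + y‖ ^ 2 := by
    rw [norm_smul, mul_pow]; norm_num
  have hpar := parallelogram_law_with_norm ℝ x y
  simp only [Rfun, hnorm]
  nlinarith

lemma summable_and_tsum_le_of_tendsto {ι : Type*} {l : Filter ι} [l.NeBot]
    {a : ι → ℕ → ℝ} {f : ℕ → ℝ} {C : ℝ} (ha : ∀ i n, 0 ≤ a i n)
    (hbound : ∀ᶠ i in l, Summable (a i) ∧ ∑' n, a i n ≤ C)
    (hlim : ∀ n, Tendsto (fun i => a i n) l (𝓝 (f n))) :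
    Summable f ∧ ∑' n, f n ≤ C := by
  have hf : 0 ≤ f := fun n => ge_of_tendsto' (hlim n) fun i => ha i n
  have hsum : ∀ s : Finset ℕ, ∑ n ∈ s, f n ≤ C := fun s =>
    le_of_tendsto (tendsto_finsetSum s fun n _ => hlim n) <| hbound.mono fun i hi =>
      (hi.1.sum_le_tsum s fun n _ => ha i n).trans hi.2
  have hfs := summable_of_sum_le hf hsum
  exact ⟨hfs, hfs.tsum_le_of_sum_le hsum⟩

lemma tendsto_inner_of_tendsto_coord {ι : Type*} {l : Filter ι} {z : ι → ltwo} {x : ltwo}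
    (hbdd : IsBoundedUnder (· ≤ ·) l fun i => ‖z i‖)
    (hlim : ∀ n, Tendsto (fun i => z i n) l (𝓝 (x n))) (w : ltwo) :
    Tendsto (fun i => ⟪z i, w⟫) l (𝓝 ⟪x, w⟫) := by
  obtain ⟨M, hM⟩ := hbdd
  rw [Metric.tendsto_nhds]
  intro ε hε
  set B := |M| + ‖x‖ + 1
  have hB : 0 < B := by positivity
  -- on a finite truncation `d` of `w`, coordinatewise convergence suffices
  obtain ⟨N, hN⟩ := ((lp.hasSum_single (by norm_num) w).tendsto_sum_nat.eventually
    (Metric.ball_mem_nhds w (by positivity : 0 < ε / (2 * B)))).exists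
  set d := ∑ n ∈ Finset.range N, lp.single 2 n (w n)
  have hinner_d (a : ltwo) : ⟪a, d⟫ = ∑ n ∈ Finset.range N, a n * w n := by
    simp [d, inner_sum, lp.inner_single_right, mul_comm]
  have hd : Tendsto (fun i => ⟪z i, d⟫) l (𝓝 ⟪x, d⟫) := by
    simp only [hinner_d]
    exact tendsto_finsetSum _ fun n _ => (hlim n).mul_const _
  filter_upwards [eventually_map.1 hM, Metric.tendsto_nhds.1 hd (ε / 2) (half_pos hε)]
    with i hMi hdi
  have hzx : ‖z i - x‖ ≤ B := (norm_sub_le _ _).trans (by linarith [le_abs_self M])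
  have hwd : ‖w - d‖ < ε / (2 * B) := by rw [← dist_eq_norm, dist_comm]; exact hN
  have htail : ‖z i - x‖ * ‖w - d‖ ≤ B * (ε / (2 * B)) :=
    mul_le_mul hzx hwd.le (norm_nonneg _) hB.le
  have hsplit : ⟪z i, w⟫ - ⟪x, w⟫ = (⟪z i, d⟫ - ⟪x, d⟫) + ⟪z i - x, w - d⟫ := by
    simp only [inner_sub_left, inner_sub_right]; ring
  rw [Real.dist_eq] at hdi ⊢
  rw [hsplit]
  calc |(⟪z i, d⟫ - ⟪x, d⟫) + ⟪z i - x, w - d⟫|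
      ≤ |⟪z i, d⟫ - ⟪x, d⟫| + ‖z i - x‖ * ‖w - d‖ :=
        (abs_add_le _ _).trans (add_le_add le_rfl (abs_real_inner_le_norm _ _))
    _ < ε / 2 + B * (ε / (2 * B)) := by linarith
    _ = ε := by field_simp; ring

lemma tendsto_dual_of_tendsto_coord {ι : Type*} {l : Filter ι} {z : ι → ltwo} {x : ltwo}
    (hbdd : IsBoundedUnder (· ≤ ·) l fun i => ‖z i‖)
    (hlim : ∀ n, Tendsto (fun i => z i n) l (𝓝 (x n))) (φ : StrongDual ℝ ltwo) :
    Tendsto (fun i => φ (z i)) l (𝓝 (φ x)) := by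
  set w := (InnerProductSpace.toDual ℝ ltwo).symm φ
  have hw (a : ltwo) : φ a = ⟪a, w⟫ := by
    rw [real_inner_comm, InnerProductSpace.toDual_symm_apply]
  simpa only [hw] using tendsto_inner_of_tendsto_coord hbdd hlim w

lemma map_eq_of_tendsto_coord {H : Type*} [NormedAddCommGroup H] [InnerProductSpace ℝ H]
    (K : ltwo →L[ℝ] H) {y : H} {ι : Type*} {l : Filter ι} [l.NeBot] {z : ι → ltwo} {x : ltwo}
    (hbdd : IsBoundedUnder (· ≤ ·) l fun i => ‖z i‖)
    (hlim : ∀ n, Tendsto (fun i => z i n) l (𝓝 (x n)))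
    (hK : Tendsto (fun i => K (z i)) l (𝓝 y)) : K x = y := by
  set v := K x - y
  have hweak : Tendsto (fun i => ⟪v, K (z i)⟫) l (𝓝 ⟪v, K x⟫) :=
    tendsto_dual_of_tendsto_coord hbdd hlim ((innerSL ℝ v).comp K)
  have hv : ⟪v, v⟫ = 0 := by
    rw [inner_sub_right, tendsto_nhds_unique hweak (tendsto_const_nhds.inner hK), sub_self]
  exact sub_eq_zero.1 (inner_self_eq_zero.1 hv)

lemma exists_ultrafilter_tendsto_coord {ι : Type*} (l : Filter ι) [l.NeBot] {z : ι → ltwo}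
    (hbdd : IsBoundedUnder (· ≤ ·) l fun i => ‖z i‖) :
    ∃ (u : Ultrafilter ι) (f : ℕ → ℝ), ↑u ≤ l ∧ ∀ n, Tendsto (fun i => z i n) u (𝓝 (f n)) := by
  obtain ⟨M, hM⟩ := hbdd
  set u := Ultrafilter.of l
  have hcube : IsCompact (Set.univ.pi fun _ : ℕ => Set.Icc (-M) M) :=
    isCompact_univ_pi fun _ => isCompact_Icc
  have hmem : ↑(u.map fun i => ⇑(z i)) ≤ 𝓟 (Set.univ.pi fun _ : ℕ => Set.Icc (-M) M) := by
    refine le_principal_iff.2 <| (Ultrafilter.of_le l) ((eventually_map.1 hM).mono fun i hi => ?_)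
    exact fun n _ => abs_le.1 ((lp.norm_apply_le_norm (by norm_num) (z i) n).trans hi)
  obtain ⟨f, -, hf⟩ := hcube.ultrafilter_le_nhds _ hmem
  exact ⟨u, f, Ultrafilter.of_le l, fun n => tendsto_pi_nhds.1 hf n⟩

lemma exists_inL1_map_eq_Rfun_le {H : Type*} [NormedAddCommGroup H] [InnerProductSpace ℝ H]
    (K : ltwo →L[ℝ] H) {y : H} {η C : ℝ} (hη : 0 < η) {ι : Type*} {l : Filter ι} [l.NeBot]
    {z : ι → ltwo} (hz : ∀ᶠ i in l, inL1 (z i) ∧ Rfun η (z i) ≤ C)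
    (hK : Tendsto (fun i => K (z i)) l (𝓝 y)) :
    ∃ x, inL1 x ∧ K x = y ∧ Rfun η x ≤ C := by
  have hbdd : IsBoundedUnder (· ≤ ·) l fun i => ‖z i‖ :=
    ⟨√(2 * C), eventually_map.2 <| hz.mono fun i hi => by
      simpa using Real.abs_le_sqrt (sq_norm_le_of_Rfun_le hη.le hi.2)⟩
  obtain ⟨u, f, hul, hf⟩ := exists_ultrafilter_tendsto_coord l hbdd
  set g : ℝ → ℝ := fun t => η * |t| + 1 / 2 * t ^ 2
  have hg (t : ℝ) : 0 ≤ g t := by positivity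
  obtain ⟨hgf, hgC⟩ := summable_and_tsum_le_of_tendsto (l := u) (fun i n => hg (z i n))
    ((hz.filter_mono hul).mono fun i hi =>
      ⟨(hasSum_Rfun η hi.1).summable, (hasSum_Rfun η hi.1).tsum_eq ▸ hi.2⟩)
    fun n => ((hf n).abs.const_mul η).add (((hf n).pow 2).const_mul _)
  have hf1 : Summable fun n => |f n| := hgf.div_const η |>.of_nonneg_of_le (fun _ => abs_nonneg _)
    fun n => by rw [le_div_iff₀ hη]; nlinarith [sq_nonneg (f n)]
  have hf2 : Memℓp f 2 := (memℓp_gen_iff (by norm_num)).2 <| by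
    simpa using (hgf.mul_left 2).of_nonneg_of_le (fun n => sq_nonneg (f n))
      fun n => by nlinarith [mul_nonneg hη.le (abs_nonneg (f n))]
  set x : ltwo := ⟨f, hf2⟩
  have hx1 : inL1 x := (memℓp_gen_iff (by norm_num)).2 (by simpa using hf1)
  exact ⟨x, hx1, map_eq_of_tendsto_coord K (hbdd.mono hul) hf (hK.mono_left hul),
    (hasSum_Rfun η hx1).tsum_eq ▸ hgC⟩

lemma eventually_Rfun_gt_of_tendsto {H : Type*} [NormedAddCommGroup H] [InnerProductSpace ℝ H]
    {K : ltwo →L[ℝ] H} {ydag : H} {η : ℝ} (hη : 0 < η) {xdag : ltwo}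
    (hxdag : IsRMinSolution K ydag η xdag) {ι : Type*} {l : Filter ι} {z : ι → ltwo}
    (hz : ∀ᶠ i in l, inL1 (z i)) (hK : Tendsto (fun i => K (z i)) l (𝓝 ydag))
    {ε : ℝ} (hε : 0 < ε) : ∀ᶠ i in l, Rfun η xdag - ε < Rfun η (z i) := by
  by_contra hfreq
  rw [not_eventually] at hfreq
  simp only [not_lt] at hfreq
  have := frequently_iff_neBot.1 hfreq
  obtain ⟨x, hx1, hKx, hRx⟩ := exists_inL1_map_eq_Rfun_le K hη (C := Rfun η xdag - ε)
    ((hz.filter_mono inf_le_left).and (mem_inf_of_right (mem_principal_self _)))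
    (hK.mono_left inf_le_left)
  linarith [hxdag.2.2 x hx1 hKx]

lemma Rfun_le_of_discrepancy {H : Type*} [NormedAddCommGroup H] [InnerProductSpace ℝ H]
    {K : ltwo →L[ℝ] H} {y ydag : H} {η β δ : ℝ} (hβ : 0 < β) {x xdag : ltwo}
    (hx : IsMinimizer K y (η * β) β x) (hdiscr : ‖K x - y‖ = δ) (hnoise : ‖y - ydag‖ ≤ δ)
    (hxdag : inL1 xdag) (hKxdag : K xdag = ydag) : Rfun η x ≤ Rfun η xdag := by
  have hmin := hx.2 xdag hxdag
  rw [Phi, Phi, hdiscr, hKxdag, norm_sub_rev] at hmin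
  have hsq : ‖y - ydag‖ ^ 2 ≤ δ ^ 2 := pow_le_pow_left₀ (norm_nonneg _) hnoise 2
  refine le_of_mul_le_mul_left ?_ hβ
  simp only [Rfun]
  nlinarith

/-- Consistency of the discrepancy principle: if for every `δ > 0` the parameter
`β(δ) > 0` is chosen such that `‖Kx_{ηβ,β}^δ − y^δ‖ = δ` and `‖y^δ − y†‖ ≤ δ`, then the
minimizers converge strongly in `ℓ²` to the `R_η`-minimizing solution `x†` as `δ → 0⁺`. -/
theorem elasticNet_discrepancy_principle_consistency
    {H : Type*} [NormedAddCommGroup H] [InnerProductSpace ℝ H]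
    (K : ltwo →L[ℝ] H) (ydag : H) (η : ℝ) (hη : 0 < η)
    (β : ℝ → ℝ) (hβpos : ∀ δ : ℝ, 0 < δ → 0 < β δ)
    (ydelta : ℝ → H) (hnoise : ∀ δ : ℝ, 0 < δ → ‖ydelta δ - ydag‖ ≤ δ)
    (xδ : ℝ → ltwo)
    (hxδ : ∀ δ : ℝ, 0 < δ → IsMinimizer K (ydelta δ) (η * β δ) (β δ) (xδ δ))
    (hdiscr : ∀ δ : ℝ, 0 < δ → ‖K (xδ δ) - ydelta δ‖ = δ)
    (xdag : ltwo) (hxdag : IsRMinSolution K ydag η xdag) :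
    Tendsto xδ (nhdsWithin 0 (Set.Ioi 0)) (nhds xdag) := by
  have hpos : ∀ᶠ δ in 𝓝[>] (0 : ℝ), 0 < δ := self_mem_nhdsWithin
  have hK : Tendsto (fun δ => K (xδ δ)) (𝓝[>] 0) (𝓝 ydag) := by
    have h2δ : Tendsto (fun δ : ℝ => δ + δ) (𝓝[>] 0) (𝓝 0) :=
      ((continuous_id.add continuous_id).tendsto' 0 0 (add_zero 0)).mono_left nhdsWithin_le_nhds
    refine tendsto_iff_norm_sub_tendsto_zero.2 <| squeeze_zero' (.of_forall fun _ => norm_nonneg _)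
      (hpos.mono fun δ hδ => (norm_sub_le_norm_sub_add_norm_sub _ (ydelta δ) _).trans
        (add_le_add (hdiscr δ hδ).le (hnoise δ hδ))) h2δ
  -- `R_η` of the midpoint is almost `≥ R_η(x†)`, but strong convexity puts it
  -- `‖xδ - x†‖² / 8` below `R_η(x†)`
  have hKmid : Tendsto (fun δ => K ((2⁻¹ : ℝ) • (xδ δ + xdag))) (𝓝[>] 0) (𝓝 ydag) := by
    simpa [hxdag.2.1, ← two_smul ℝ ydag] using (hK.add_const (K xdag)).const_smul (2⁻¹ : ℝ)
  rw [Metric.tendsto_nhds]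
  intro ε hε
  filter_upwards [hpos, eventually_Rfun_gt_of_tendsto hη hxdag
    (hpos.mono fun δ hδ => inL1_smul_add _ (hxδ δ hδ).1 hxdag.1) hKmid
    (by positivity : 0 < ε ^ 2 / 8)] with δ hδ hmid
  have hR := Rfun_le_of_discrepancy (hβpos δ hδ) (hxδ δ hδ) (hdiscr δ hδ) (hnoise δ hδ)
    hxdag.1 hxdag.2.1
  have hconv := Rfun_half_smul_add_le hη.le (hxδ δ hδ).1 hxdag.1
  rw [dist_eq_norm]
  exact lt_of_pow_lt_pow_left₀ 2 hε.le (by nlinarith)
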